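/- arXiv:1102.2799 — 2 statements merged into one kernel-verified Lean document; each statement's English description precedes it below -/
import Mathlib

section
/- The number of frequency permutations π ∈ S_n^λ with d_max(e, π) ≤ d equals per(A)/ (λ!)^m, where A is the n×n 0-1 matrix with A_{i,j} = 1 iff |⌈i/λ⌉ − ⌈j/λ⌉| ≤ d, and per denotes the permanent. -/
open scoped Classical

/-- `π` is a frequency permutation over `{1,…,m}` (represented 0-based as `Fin m`)
of length `n = m*lam`, i.e. each symbol appears exactly `lam` times. -/
def isFreqPerm (m lam : ℕ) (π : Fin (m * lam) → Fin m) : Prop :=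
  ∀ k : Fin m, (Finset.univ.filter (fun i => π i = k)).card = lam

noncomputable def FPset (m lam : ℕ) : Finset (Fin (m * lam) → Fin m) :=
  Finset.univ.filter (isFreqPerm m lam)

/-- Chebyshev distance `max_i |x_i - y_i|`. -/
def cheb {n m : ℕ} (x y : Fin n → Fin m) : ℕ :=
  Finset.univ.sup fun i => Nat.dist (x i).val (y i).val

/-- The identity frequency permutation `e_i = ⌈i/λ⌉` (0-based: `e_i = i / λ`). -/
def ident (m lam : ℕ) : Fin (m * lam) → Fin m := fun i =>
  ⟨i.val / lam, Nat.div_lt_of_lt_mul (lt_of_lt_of_eq i.isLt (Nat.mul_comm m lam))⟩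

/-- Ball of radius `d` centered at `π` inside `S_n^λ` under Chebyshev distance. -/
noncomputable def ball (m lam d : ℕ) (π : Fin (m * lam) → Fin m) :
    Finset (Fin (m * lam) → Fin m) :=
  (FPset m lam).filter fun ρ => cheb ρ π ≤ d

noncomputable def Vinf (m lam d : ℕ) : ℕ := (ball m lam d (ident m lam)).card

/-- The permanent of a square matrix. -/
def perMat {n : ℕ} (A : Matrix (Fin n) (Fin n) ℕ) : ℕ :=
  ∑ σ : Equiv.Perm (Fin n), ∏ i, A i (σ i)

/-- The 0-1 matrix `A^{(λ,n,d)}` with `a_{i,j} = 1` iff `|⌈i/λ⌉ - ⌈j/λ⌉| ≤ d`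
(indices 0-based, so `⌈i/λ⌉` becomes `i/λ + 1`). -/
def Amat (m lam d : ℕ) : Matrix (Fin (m * lam)) (Fin (m * lam)) ℕ :=
  fun i j => if Nat.dist (i.val / lam) (j.val / lam) ≤ d then 1 else 0

/-!
A permutation `σ` contributes `1` to `per(A)` exactly when `e ∘ σ` lies in the ball of radius `d`
around `e`, and every frequency permutation arises as `e ∘ σ`. So `per(A)` counts pairs
`(ρ, σ)` with `ρ` in the ball and `e ∘ σ = ρ`; the fibre over `ρ` is a coset of the stabiliser
of `e`, which permutes each block of `λ` equal symbols independently and so has `(λ!)^m`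
elements.
-/

open Finset Equiv Nat

section PermFibers

variable {α β : Type*} [Fintype α] [DecidableEq β]

theorem card_filter_comp_perm_eq (f : α → β) (σ : Perm α) (b : β) :
    #{a | f (σ a) = b} = #{a | f a = b} := by
  simp only [← Fintype.card_subtype]
  exact Fintype.card_congr (σ.subtypeEquiv fun _ => Iff.rfl)

variable [DecidableEq α] [Fintype β]

theorem card_perm_comp_eq (f g : α → β) (hg : ∀ b, #{a | g a = b} = #{a | f a = b}) :
    #{σ : Perm α | f ∘ σ = g} = ∏ b, (#{a | f a = b})! := by
  simp only [← Fintype.card_subtype] at hg ⊢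
  let σ₀ : Perm α := ofFiberEquiv fun b => Fintype.equivOfCardEq (hg b)
  have hσ₀ : f ∘ σ₀ = g := funext (ofFiberEquiv_map _)
  rw [← DomMulAct.stabilizer_card f]
  -- right multiplication by `σ₀⁻¹` carries the fibre over `g` onto the stabiliser of `f`
  refine Fintype.card_congr (subtypeEquiv (Equiv.mulRight σ₀⁻¹) fun σ => ?_)
  rw [← hσ₀, ← (σ₀⁻¹).surjective.injective_comp_right.eq_iff]
  simp only [coe_mulRight, Function.comp_assoc, ← Perm.coe_mul, mul_inv_cancel,
    Perm.coe_one, Function.comp_id]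

theorem card_perm_comp_mem (f : α → β) (S : Finset (α → β))
    (hS : ∀ g ∈ S, ∀ b, #{a | g a = b} = #{a | f a = b}) :
    #{σ : Perm α | f ∘ σ ∈ S} = #S * ∏ b, (#{a | f a = b})! := by
  rw [card_eq_sum_card_fiberwise (f := fun σ : Perm α => f ∘ σ) (t := S) ?maps, ← smul_eq_mul,
    ← sum_const]
  case maps => exact fun _ hσ => (mem_filter.mp hσ).2
  refine sum_congr rfl fun g hg => ?_
  rw [filter_filter, ← card_perm_comp_eq f g (hS g hg)]
  congr 1
  ext σ
  simp only [mem_filter, mem_univ, true_and, and_iff_right_iff_imp]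
  rintro rfl
  exact hg

end PermFibers

theorem perMat_boole {n : ℕ} (p : Fin n → Fin n → Prop) [DecidableRel p] :
    perMat (fun i j => if p i j then 1 else 0) = #{σ : Perm (Fin n) | ∀ i, p i (σ i)} := by
  simp only [perMat, prod_boole, mem_univ, true_implies, sum_boole, Nat.cast_id]

theorem cheb_le_iff {n m : ℕ} (x y : Fin n → Fin m) (d : ℕ) :
    cheb x y ≤ d ↔ ∀ i, Nat.dist (x i) (y i) ≤ d := by
  simp [cheb, Finset.sup_le_iff]

theorem ident_finProdFinEquiv {m lam : ℕ} (p : Fin m × Fin lam) :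
    ident m lam (finProdFinEquiv p) = p.1 := by
  ext
  simp [ident, finProdFinEquiv, Nat.add_mul_div_left _ _ p.2.pos, Nat.div_eq_of_lt p.2.isLt]

theorem isFreqPerm_ident (m lam : ℕ) : isFreqPerm m lam (ident m lam) := by
  intro k
  rw [← Fintype.card_subtype,
    ← Fintype.card_congr (finProdFinEquiv.subtypeEquiv fun p => by rw [ident_finProdFinEquiv]),
    Fintype.card_subtype, ← univ_product_univ, filter_product_left (· = k)]
  simp [filter_eq']

theorem isFreqPerm.comp_perm {m lam : ℕ} {π : Fin (m * lam) → Fin m} (h : isFreqPerm m lam π)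
    (σ : Perm (Fin (m * lam))) : isFreqPerm m lam (π ∘ σ) := fun k =>
  (card_filter_comp_perm_eq π σ k).trans (h k)

theorem isFreqPerm_of_mem_ball {m lam d : ℕ} {π ρ : Fin (m * lam) → Fin m}
    (h : ρ ∈ ball m lam d π) : isFreqPerm m lam ρ :=
  (mem_filter.mp (mem_filter.mp h).1).2

theorem ident_comp_mem_ball_iff {m lam d : ℕ} (σ : Perm (Fin (m * lam))) :
    ident m lam ∘ σ ∈ ball m lam d (ident m lam) ↔
      ∀ i, Nat.dist (i.val / lam) ((σ i).val / lam) ≤ d := by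
  simp [ball, FPset, (isFreqPerm_ident m lam).comp_perm σ, cheb_le_iff, ident, Nat.dist_comm]

theorem Vinf_eq_permanent_div_general (m lam d : ℕ) :
    Vinf m lam d = perMat (Amat m lam d) / (Nat.factorial lam) ^ m := by
  have hper : perMat (Amat m lam d) = Vinf m lam d * lam ! ^ m :=
    calc perMat (Amat m lam d)
        = #{σ : Perm (Fin (m * lam)) | ident m lam ∘ σ ∈ ball m lam d (ident m lam)} :=
          (perMat_boole _).trans (by simp only [ident_comp_mem_ball_iff])
      _ = Vinf m lam d * ∏ k, (#{i | ident m lam i = k})! :=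
          card_perm_comp_mem _ _ fun ρ hρ k => by
            rw [isFreqPerm_ident m lam k, isFreqPerm_of_mem_ball hρ k]
      _ = Vinf m lam d * lam ! ^ m := by simp [isFreqPerm_ident m lam _]
  rw [hper, Nat.mul_div_cancel _ (by positivity)]

theorem Vinf_eq_permanent_div (m lam d : ℕ) (hlam : 0 < lam) :
    Vinf m lam d = perMat (Amat m lam d) / (Nat.factorial lam) ^ m :=
  Vinf_eq_permanent_div_general m lam d
end

section
/- For fixed λ and d, the sequence a_m = V_∞(λ, λm, d) satisfies a linear recurrence with constant integer coefficients of order at most C(2dλ, dλ), namely the recurrence whose characteristic polynomial is the characteristic polynomial of the adjacency matrix A_H of H_{λ,d}. -/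
open scoped Classical

/-- The interval `[dλ+1, dλ+λ]` of integers. -/
noncomputable def Qset (lam d : ℕ) : Finset ℤ := Finset.Icc ((d * lam : ℤ) + 1) ((d * lam : ℤ) + lam)

/-- Vertices of `H_{λ,d}`: `dλ`-element subsets of `[-dλ+1, dλ]`. -/
def Hvert (lam d : ℕ) (P : Finset ℤ) : Prop :=
  P ⊆ Finset.Icc (-(d * lam : ℤ) + 1) (d * lam) ∧ P.card = d * lam

/-- Edge relation of `H_{λ,d}`. -/
def Hedge (lam d : ℕ) (P P' : Finset ℤ) : Prop :=
  ∃ X ⊆ P ∪ Qset lam d, X.card = lam ∧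
    (∀ s ∈ (P ∪ Qset lam d) \ X, -(d * lam : ℤ) + lam < s) ∧
    P' = (((P ∪ Qset lam d) \ X).image fun s => s - (lam : ℤ)) \ Qset lam d

/-- The vertex set of `H_{λ,d}` as a `Finset` of `Finset ℤ`. -/
noncomputable def verts (lam d : ℕ) : Finset (Finset ℤ) :=
  (Finset.Icc (-(d * lam : ℤ) + 1) (d * lam)).powerset.filter fun P => P.card = d * lam

/-- Out-degree of a vertex `P` of `H_{λ,d}`, counting the valid subsets `X`. -/
noncomputable def outdeg (lam d : ℕ) (P : Finset ℤ) : ℕ :=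
  ((P ∪ Qset lam d).powerset.filter fun X => X.card = lam ∧
    ∀ s ∈ (P ∪ Qset lam d) \ X, -(d * lam : ℤ) + lam < s).card

/-- Integer adjacency matrix of `H_{λ,d}` (entries count the valid subsets `X`). -/
noncomputable def AHZ (lam d : ℕ) :
    Matrix {P // P ∈ verts lam d} {P // P ∈ verts lam d} ℤ :=
  fun P P' =>
    (((P.val ∪ Qset lam d).powerset.filter fun X => X.card = lam ∧
      (∀ s ∈ (P.val ∪ Qset lam d) \ X, -(d * lam : ℤ) + lam < s) ∧
      P'.val = (((P.val ∪ Qset lam d) \ X).image fun s => s - (lam : ℤ)) \ Qset lam d).card : ℤ)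

/-!
Read a sequence of the ball symbol by symbol. Symbol `t` may only occupy the 1-based positions
`tλ - dλ + 1, …, tλ + dλ + λ`, i.e. the shifts `[-dλ+1, dλ] ∪ [dλ+1, dλ+λ]` relative to `tλ`.
Once the symbols `0, …, t-1` are placed, the open positions among the shifts `[-dλ+1, dλ]`
form a `dλ`-subset, a vertex of `H_{λ,d}`; placing symbol `t` on `λ` open positions, leaving
none behind that would drop out of reach, is an edge, after which the frame moves by `λ`.
Hence `V_∞(λ, λm, d)` counts the closed walks of length `m` at `[1, dλ]`, which is an entry
of `A_H ^ m`, and Cayley–Hamilton for the `C(2dλ, dλ)`-square matrix `A_H` gives the recurrence.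
-/

open Finset

namespace Matrix

variable {ι R : Type*} [Fintype ι] [DecidableEq ι]

theorem sum_charpoly_coeff_mul_pow_add_apply [CommRing R] [Nontrivial R] (A : Matrix ι ι R)
    (j : ℕ) (u v : ι) :
    ∑ k ∈ range (Fintype.card ι + 1), A.charpoly.coeff k * (A ^ (j + k)) u v = 0 := by
  have hCH : A ^ j * ∑ k ∈ range (Fintype.card ι + 1), A.charpoly.coeff k • A ^ k = 0 := by
    rw [← A.charpoly_natDegree_eq_dim, ← Polynomial.aeval_eq_sum_range, aeval_self_charpoly,
      mul_zero]
  simpa [mul_sum, sum_apply, pow_add] using congrFun (congrFun hCH u) v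

theorem eq_sum_pow_mul_of_transfer [CommSemiring R] (A : Matrix ι ι R) (N : ℕ → ι → R)
    (S : ℕ → ι → Prop) {m : ℕ}
    (hstep : ∀ t < m, ∀ P, S t P → N t P = ∑ Q, A P Q * N (t + 1) Q)
    (hS : ∀ t P Q, S t P → A P Q ≠ 0 → S (t + 1) Q) {P : ι} (hP : S 0 P) :
    N 0 P = ∑ Q, (A ^ m) P Q * N m Q := by
  suffices h : ∀ r t, t + r = m → ∀ P, S t P → N t P = ∑ Q, (A ^ r) P Q * N m Q from
    h m 0 (zero_add m) P hP
  intro r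
  induction r with
  | zero =>
    rintro t rfl P -
    simp [one_apply]
  | succ r ih =>
    intro t htr P hP
    have hnext (Q) : A P Q * N (t + 1) Q = A P Q * ∑ R, (A ^ r) Q R * N m R := by
      by_cases hQ : A P Q = 0
      · simp [hQ]
      · rw [ih (t + 1) (by omega) Q (hS t P Q hP hQ)]
    simp_rw [hstep t (by omega) P hP, hnext, pow_succ', mul_apply, mul_sum, sum_mul, mul_assoc]
    exact sum_comm

end Matrix

namespace ChebyshevBall

noncomputable def window (lam d : ℕ) : Finset ℤ := Icc (-(d * lam : ℤ) + 1) (d * lam)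

noncomputable def startVertex (lam d : ℕ) : Finset ℤ := Icc 1 (d * lam : ℤ)

variable {m lam d t : ℕ} {P X : Finset ℤ}

lemma mem_window {x : ℤ} : x ∈ window lam d ↔ -(d * lam : ℤ) + 1 ≤ x ∧ x ≤ d * lam :=
  mem_Icc

lemma mem_startVertex {x : ℤ} : x ∈ startVertex lam d ↔ 1 ≤ x ∧ x ≤ d * lam := mem_Icc

lemma mem_Qset {x : ℤ} : x ∈ Qset lam d ↔ d * lam + 1 ≤ x ∧ x ≤ d * lam + lam := mem_Icc

lemma mem_verts : P ∈ verts lam d ↔ P ⊆ window lam d ∧ P.card = d * lam := by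
  simp [verts, window]

lemma card_verts : (verts lam d).card = (2 * d * lam).choose (d * lam) := by
  rw [show verts lam d = (window lam d).powersetCard (d * lam) from
    powersetCard_eq_filter.symm, card_powersetCard, window, Int.card_Icc]
  congr
  rw [show (d * lam : ℤ) + 1 - (-(d * lam : ℤ) + 1) = ((2 * d * lam : ℕ) : ℤ) by
    push_cast; ring]
  rfl

lemma card_startVertex : (startVertex lam d).card = d * lam := by
  simp only [startVertex, Int.card_Icc, add_sub_cancel_right]
  omega

lemma startVertex_mem_verts : startVertex lam d ∈ verts lam d :=
  mem_verts.2 ⟨fun x hx => by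
    rw [mem_startVertex] at hx; rw [mem_window]; constructor <;> linarith, card_startVertex⟩

lemma eq_startVertex_of_subset (hP : P ∈ verts lam d) (h : startVertex lam d ⊆ P) :
    P = startVertex lam d :=
  (eq_of_subset_of_card_le h (by rw [(mem_verts.1 hP).2, card_startVertex])).symm

/-- At time `t` a position is read in coordinates shifted by `tλ`; this is the frame in which
the window of `H_{λ,d}` is fixed, and symbol `t` may occupy exactly the shifts in
`[-dλ+1, dλ+λ]`. -/
def shift (lam t : ℕ) {n : ℕ} (i : Fin n) : ℤ := i + 1 - t * lam

section Shift

variable {n : ℕ}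

lemma shift_succ (i : Fin n) : shift lam (t + 1) i = shift lam t i - lam := by
  simp only [shift]; push_cast; ring

lemma shift_injective : Function.Injective (shift lam t : Fin n → ℤ) := fun i j h => by
  simp only [shift] at h
  exact Fin.ext (by omega)

lemma shift_add_le (i : Fin (m * lam)) : shift lam t i + t * lam ≤ m * lam := by
  have : ((i : ℕ) : ℤ) < ((m * lam : ℕ) : ℤ) := by exact_mod_cast i.isLt
  simp only [shift]; push_cast at this; linarith

lemma exists_shift_eq {s : ℤ} (h₁ : 1 ≤ s + t * lam) (h₂ : s + t * lam ≤ m * lam) :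
    ∃ i : Fin (m * lam), shift lam t i = s := by
  lift s + t * lam - 1 to ℕ using (by linarith) with k hk
  refine ⟨⟨k, by zify; linarith⟩, ?_⟩
  simp only [shift]; linarith

end Shift

/-- A vertex `P` of `H_{λ,d}`, reached at time `t`, is the set of shifts of the window positions
not yet filled by the symbols `0, …, t-1`. -/
def Unfilled (lam d t : ℕ) (P : Finset ℤ) {n : ℕ} (i : Fin n) : Prop :=
  shift lam t i ∈ P ∨ (d * lam : ℤ) < shift lam t i

lemma unfilled_iff {n : ℕ} {i : Fin n} : Unfilled lam d t P i ↔
    shift lam t i ∈ P ∪ Qset lam d ∨ (d * lam : ℤ) + lam < shift lam t i := by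
  simp only [Unfilled, mem_union, mem_Qset]
  by_cases h : shift lam t i ∈ P
  · simp [h]
  · simp only [h, false_or]
    omega

noncomputable def moves (lam d : ℕ) (P : Finset ℤ) : Finset (Finset ℤ) :=
  (P ∪ Qset lam d).powerset.filter fun X => X.card = lam ∧
    ∀ s ∈ (P ∪ Qset lam d) \ X, -(d * lam : ℤ) + lam < s

noncomputable def next (lam d : ℕ) (P X : Finset ℤ) : Finset ℤ :=
  (((P ∪ Qset lam d) \ X).image fun s => s - (lam : ℤ)) \ Qset lam d

lemma mem_moves : X ∈ moves lam d P ↔ X ⊆ P ∪ Qset lam d ∧ X.card = lam ∧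
    ∀ s ∈ (P ∪ Qset lam d) \ X, -(d * lam : ℤ) + lam < s := by
  simp only [moves, mem_filter, mem_powerset]

lemma AHZ_apply (P Q : {P // P ∈ verts lam d}) :
    AHZ lam d P Q = (((moves lam d P).filter fun X => next lam d P X = Q).card : ℤ) := by
  unfold AHZ moves next
  rw [filter_filter]
  simp only [and_assoc, eq_comm]

lemma bounds_of_mem_union (hP : P ⊆ window lam d) {x : ℤ} (hx : x ∈ P ∪ Qset lam d) :
    -(d * lam : ℤ) + 1 ≤ x ∧ x ≤ d * lam + lam := by
  rcases mem_union.1 hx with h | h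
  · have := mem_window.1 (hP h); constructor <;> linarith
  · have := mem_Qset.1 h; constructor <;> nlinarith

lemma mem_next (hP : P ⊆ window lam d) {y : ℤ} :
    y ∈ next lam d P X ↔ y + lam ∈ (P ∪ Qset lam d) \ X := by
  simp only [next, mem_sdiff, mem_image]
  constructor
  · rintro ⟨⟨s, hs, rfl⟩, -⟩
    simpa using hs
  · intro h
    refine ⟨⟨y + lam, h, by ring⟩, fun hq => ?_⟩
    have := bounds_of_mem_union hP h.1
    have := mem_Qset.1 hq
    linarith

lemma next_mem_verts (hP : P ∈ verts lam d) (hX : X ∈ moves lam d P) :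
    next lam d P X ∈ verts lam d := by
  obtain ⟨hPW, hPcard⟩ := mem_verts.1 hP
  obtain ⟨hXsub, hXcard, hXlow⟩ := mem_moves.1 hX
  have hdisj : Disjoint P (Qset lam d) := disjoint_left.2 fun x hxP hxQ => by
    have := mem_window.1 (hPW hxP); have := mem_Qset.1 hxQ; linarith
  have hQcard : (Qset lam d).card = lam := by simp [Qset]
  refine mem_verts.2 ⟨fun y hy => ?_, ?_⟩
  · have hy := (mem_next hPW).1 hy
    have := bounds_of_mem_union hPW (mem_sdiff.1 hy).1
    have := hXlow _ hy
    rw [mem_window]; constructor <;> linarith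
  · rw [next, sdiff_eq_self_of_disjoint, card_image_of_injective _ (sub_left_injective),
      card_sdiff_of_subset hXsub, card_union_of_disjoint hdisj, hPcard, hQcard, hXcard,
      Nat.add_sub_cancel]
    refine disjoint_left.2 fun y hy hq => ?_
    obtain ⟨s, hs, rfl⟩ := mem_image.1 hy
    have := bounds_of_mem_union hPW (mem_sdiff.1 hs).1
    have := mem_Qset.1 hq
    linarith

lemma next_lower_bound (hP : P ⊆ window lam d) (hmin : ∀ x ∈ P, 1 ≤ x + t * lam) :
    ∀ y ∈ next lam d P X, 1 ≤ y + (t + 1 : ℕ) * lam := by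
  intro y hy
  have hy := (mem_sdiff.1 ((mem_next hP).1 hy)).1
  push_cast
  rcases mem_union.1 hy with h | h
  · linarith [hmin _ h]
  · have := (mem_Qset.1 h).1
    nlinarith

lemma unfilled_next_iff {n : ℕ} (hP : P ⊆ window lam d) (hX : X ⊆ P ∪ Qset lam d)
    (i : Fin n) :
    Unfilled lam d (t + 1) (next lam d P X) i ↔ Unfilled lam d t P i ∧ shift lam t i ∉ X := by
  rw [unfilled_iff (P := P)]
  simp only [Unfilled, shift_succ, mem_next hP, sub_add_cancel, mem_sdiff]
  have hX' : shift lam t i ∈ X → shift lam t i ≤ d * lam + lam :=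
    fun h => (bounds_of_mem_union hP (hX h)).2
  constructor
  · rintro (h | h)
    · exact ⟨Or.inl h.1, h.2⟩
    · exact ⟨Or.inr (by linarith), fun h' => by linarith [hX' h']⟩
  · rintro ⟨h | h, hn⟩
    · exact Or.inl ⟨h, hn⟩
    · exact Or.inr (by linarith)

/-- Filled positions of a completion carry this fixed value below `t`, so that completions only
record where the symbols `t, …, m-1` go. -/
def filler (m lam t : ℕ) (i : Fin (m * lam)) : Fin m :=
  ⟨min (ident m lam i).val (t - 1), (min_le_left _ _).trans_lt (ident m lam i).isLt⟩

lemma filler_lt (ht : 0 < t) (i : Fin (m * lam)) : (filler m lam t i).val < t :=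
  (min_le_right _ _).trans_lt (by omega)

/-- `f` places the symbols `t, …, m-1` on the positions left unfilled by the state `P` at time
`t`, each `λ` times and within distance `d` of the identity. Shifts beyond the last position count
as unfilled, which forces the state at time `m` to be `[1, dλ]`. -/
structure IsCompletion (m lam d t : ℕ) (P : Finset ℤ) (f : Fin (m * lam) → Fin m) : Prop where
  unfilled_iff_le : ∀ i, Unfilled lam d t P i ↔ t ≤ (f i).val
  eq_filler : ∀ i, ¬ Unfilled lam d t P i → f i = filler m lam t i
  card_fiber : ∀ k : Fin m, t ≤ k.val → (univ.filter fun i => f i = k).card = lam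
  shift_bounds : ∀ i, t ≤ (f i).val →
    -(d * lam : ℤ) + 1 ≤ shift lam (f i) i ∧ shift lam (f i) i ≤ d * lam + lam
  tail_mem : ∀ s ∈ window lam d, (m * lam : ℤ) < s + t * lam → s ∈ P

noncomputable def completions (m lam d t : ℕ) (P : Finset ℤ) :
    Finset (Fin (m * lam) → Fin m) :=
  univ.filter (IsCompletion m lam d t P)

lemma mem_completions {f : Fin (m * lam) → Fin m} :
    f ∈ completions m lam d t P ↔ IsCompletion m lam d t P f := by
  simp [completions]

lemma unfilled_startVertex_zero {n : ℕ} (i : Fin n) : Unfilled lam d 0 (startVertex lam d) i := by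
  simp only [Unfilled, shift, mem_startVertex]
  by_cases h : (i : ℤ) + 1 - (0 : ℕ) * lam ≤ d * lam
  · exact Or.inl ⟨by push_cast; omega, h⟩
  · exact Or.inr (by linarith)

lemma dist_div_le_iff (hlam : 0 < lam) (a : ℕ) (i : Fin (m * lam)) :
    Nat.dist a (i / lam) ≤ d ↔
      -(d * lam : ℤ) + 1 ≤ shift lam a i ∧ shift lam a i ≤ d * lam + lam := by
  have hi := Nat.div_add_mod i lam
  have hr := Nat.mod_lt i hlam
  set q := (i : ℕ) / lam
  set r := (i : ℕ) % lam
  have hshift : shift lam a i = ((q : ℤ) - a) * lam + r + 1 := by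
    simp only [shift]; rw [← hi]; push_cast; ring
  have hr0 : (0 : ℤ) ≤ r := by positivity
  have hr' : (r : ℤ) < lam := by exact_mod_cast hr
  have hlam' : (0 : ℤ) < lam := by exact_mod_cast hlam
  have hlow : -(d * lam : ℤ) + 1 ≤ ((q : ℤ) - a) * lam + r + 1 ↔ -(d : ℤ) ≤ q - a := by
    constructor
    · intro h; by_contra h'; nlinarith
    · intro h; nlinarith
  have hupp : ((q : ℤ) - a) * lam + r + 1 ≤ d * lam + lam ↔ (q : ℤ) - a ≤ d := by
    constructor
    · intro h; by_contra h'; nlinarith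
    · intro h; nlinarith
  rw [hshift, hlow, hupp, Nat.dist]
  omega

lemma ball_eq_completions_zero (hlam : 0 < lam) :
    ball m lam d (ident m lam) = completions m lam d 0 (startVertex lam d) := by
  ext f
  simp only [ball, FPset, cheb, mem_filter, mem_univ, true_and, mem_completions,
    Finset.sup_le_iff, ident, dist_div_le_iff hlam]
  constructor
  · rintro ⟨hperm, hdist⟩
    exact ⟨fun i => iff_of_true (unfilled_startVertex_zero i) (Nat.zero_le _),
      fun i h => absurd (unfilled_startVertex_zero i) h, fun k _ => hperm k,
      fun i _ => hdist i trivial, fun s hs hlt =>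
        mem_startVertex.2 ⟨by push_cast at hlt; nlinarith, (mem_window.1 hs).2⟩⟩
  · intro hf
    exact ⟨fun k => hf.card_fiber k (Nat.zero_le _),
      fun i _ => hf.shift_bounds i (Nat.zero_le _)⟩

lemma completions_last_startVertex :
    completions m lam d m (startVertex lam d) = {filler m lam m} := by
  have hfilled (i : Fin (m * lam)) : ¬ Unfilled lam d m (startVertex lam d) i := by
    have := shift_add_le (t := m) i
    rintro (h | h)
    · linarith [(mem_startVertex.1 h).1]
    · nlinarith
  ext f
  rw [mem_completions, mem_singleton]
  constructor
  · exact fun hf => funext fun i => hf.eq_filler i (hfilled i)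
  · rintro rfl
    exact ⟨fun i => iff_of_false (hfilled i) (by simp), fun _ _ => rfl,
      fun k hk => absurd k.isLt (by omega), fun i hi => absurd (filler m lam m i).isLt (by omega),
      fun s hs hlt => mem_startVertex.2 ⟨by linarith, (mem_window.1 hs).2⟩⟩

lemma completions_last_eq_empty (hP : P ∈ verts lam d) (hne : P ≠ startVertex lam d) :
    completions m lam d m P = ∅ := by
  refine eq_empty_of_forall_notMem fun f hf => hne (eq_startVertex_of_subset hP fun s hs => ?_)
  have hs' := mem_startVertex.1 hs
  exact (mem_completions.1 hf).tail_mem s (mem_window.2 ⟨by linarith, hs'.2⟩) (by linarith)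

lemma unfilled_zero (hP : P ∈ verts lam d) (hmin : ∀ x ∈ P, 1 ≤ x) {n : ℕ} (i : Fin n) :
    Unfilled lam d 0 P i := by
  have hsub : P ⊆ startVertex lam d := fun x hx =>
    mem_startVertex.2 ⟨hmin x hx, (mem_window.1 ((mem_verts.1 hP).1 hx)).2⟩
  rw [eq_of_subset_of_card_le hsub (by rw [card_startVertex, (mem_verts.1 hP).2])]
  exact unfilled_startVertex_zero i

def placed (m lam t : ℕ) (f : Fin (m * lam) → Fin m) : Finset ℤ :=
  (univ.filter fun i => (f i).val = t).image (shift lam t)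

lemma shift_mem_placed {f : Fin (m * lam) → Fin m} (i : Fin (m * lam)) :
    shift lam t i ∈ placed m lam t f ↔ (f i).val = t := by
  simp [placed, shift_injective.eq_iff]

lemma placed_mem_moves (ht : t < m) (hmin : ∀ x ∈ P, 1 ≤ x + t * lam)
    {f : Fin (m * lam) → Fin m} (hf : IsCompletion m lam d t P f) :
    placed m lam t f ∈ moves lam d P := by
  refine mem_moves.2 ⟨fun x hx => ?_, ?_, fun s hs => ?_⟩
  · obtain ⟨i, hi, rfl⟩ := mem_image.1 hx
    have hi : (f i).val = t := (mem_filter.1 hi).2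
    have hb := (hf.shift_bounds i hi.ge).2
    rw [hi] at hb
    rcases unfilled_iff.1 ((hf.unfilled_iff_le i).2 hi.ge) with h | h
    · exact h
    · linarith
  · rw [placed, card_image_of_injective _ shift_injective]
    refine Eq.trans ?_ (hf.card_fiber ⟨t, ht⟩ le_rfl)
    simp only [Fin.ext_iff]
  · obtain ⟨hsPQ, hsX⟩ := mem_sdiff.1 hs
    by_contra! hlow
    have hlo : 1 ≤ s + t * lam := by
      rcases mem_union.1 hsPQ with h | h
      · exact hmin s h
      · have := (mem_Qset.1 h).1; nlinarith
    have htm : ((t + 1 : ℕ) : ℤ) * lam ≤ m * lam := by gcongr; exact_mod_cast ht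
    obtain ⟨i, rfl⟩ := exists_shift_eq (m := m) hlo (by push_cast at htm; nlinarith)
    have hle := (hf.unfilled_iff_le i).1 (unfilled_iff.2 (Or.inl hsPQ))
    have hne : (f i).val ≠ t := fun h => hsX ((shift_mem_placed i).2 h)
    have hb := (hf.shift_bounds i hle).1
    have hgt : ((t + 1 : ℕ) : ℤ) * lam ≤ (f i).val * lam := by
      gcongr; exact_mod_cast (by omega)
    simp only [shift] at hb hlow
    push_cast at hgt
    linarith

def forgetSymbol (t : ℕ) (f : Fin (m * lam) → Fin m) : Fin (m * lam) → Fin m :=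
  fun i => if t + 1 ≤ (f i).val then f i else filler m lam (t + 1) i

lemma isCompletion_forgetSymbol (hP : P ⊆ window lam d) {f : Fin (m * lam) → Fin m}
    (hf : IsCompletion m lam d t P f) (hX : placed m lam t f ⊆ P ∪ Qset lam d) :
    IsCompletion m lam d (t + 1) (next lam d P (placed m lam t f)) (forgetSymbol t f) := by
  have hunf (i) :
      Unfilled lam d (t + 1) (next lam d P (placed m lam t f)) i ↔ t + 1 ≤ (f i).val := by
    rw [unfilled_next_iff hP hX, hf.unfilled_iff_le, shift_mem_placed]
    omega
  have hval (i) : t + 1 ≤ (forgetSymbol t f i).val ↔ t + 1 ≤ (f i).val := by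
    unfold forgetSymbol
    split_ifs with h
    · exact iff_of_true h h
    · exact iff_of_false (by have := filler_lt (m := m) (by omega : 0 < t + 1) i; omega) h
  refine ⟨fun i => (hunf i).trans (hval i).symm, fun i h => if_neg ((hunf i).not.1 h),
    fun k hk => ?_, fun i hi => ?_, fun s hs hlt => ?_⟩
  · refine Eq.trans ?_ (hf.card_fiber k (by omega))
    congr 1
    refine filter_congr fun i _ => ?_
    by_cases h : t + 1 ≤ (f i).val
    · simp only [forgetSymbol, if_pos h]
    · have := filler_lt (m := m) (by omega : 0 < t + 1) i
      simp only [forgetSymbol, if_neg h]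
      constructor <;> rintro rfl <;> exact absurd hk (by omega)
  · have h := (hval i).1 hi
    simp only [forgetSymbol, if_pos h] at hi ⊢
    exact hf.shift_bounds i (by omega)
  · rw [mem_next hP, mem_sdiff]
    refine ⟨?_, fun h => ?_⟩
    · by_cases hs' : s + lam ≤ d * lam
      · refine mem_union_left _ (hf.tail_mem _ (mem_window.2 ⟨?_, hs'⟩) ?_) <;>
          [linarith [(mem_window.1 hs).1]; (push_cast at hlt; linarith)]
      · exact mem_union_right _ (mem_Qset.2 ⟨by linarith, by linarith [(mem_window.1 hs).2]⟩)
    · obtain ⟨i, -, hi⟩ := mem_image.1 h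
      have := shift_add_le (t := t) i
      push_cast at hlt
      linarith

def restoreSymbol (ht : t < m) (X : Finset ℤ) (g : Fin (m * lam) → Fin m) :
    Fin (m * lam) → Fin m := fun i =>
  if t + 1 ≤ (g i).val then g i else if shift lam t i ∈ X then ⟨t, ht⟩ else filler m lam t i

lemma restoreSymbol_val_le (ht : t < m) (X : Finset ℤ) {g : Fin (m * lam) → Fin m}
    {i : Fin (m * lam)} (h : ¬ t + 1 ≤ (g i).val) : (restoreSymbol ht X g i).val ≤ t := by
  unfold restoreSymbol
  split_ifs
  · rfl
  · exact (min_le_right _ _).trans (Nat.sub_le t 1)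

lemma IsCompletion.exists_shift_eq_of_mem {g : Fin (m * lam) → Fin m}
    (hg : IsCompletion m lam d (t + 1) (next lam d P X) g) (ht : t < m)
    (hP : P ⊆ window lam d) (hmin : ∀ x ∈ P, 1 ≤ x + t * lam) (hX : X ⊆ P ∪ Qset lam d)
    {x : ℤ} (hx : x ∈ X) : ∃ i : Fin (m * lam), shift lam t i = x := by
  have hb := bounds_of_mem_union hP (hX hx)
  have htm : ((t + 1 : ℕ) : ℤ) * lam ≤ m * lam := by gcongr; exact_mod_cast ht
  push_cast at htm
  refine exists_shift_eq ?_ (not_lt.1 fun hlt => ?_)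
  · rcases mem_union.1 (hX hx) with h | h
    · exact hmin x h
    · have := (mem_Qset.1 h).1; nlinarith
  · have hmem := hg.tail_mem (x - lam) (mem_window.2 ⟨by nlinarith, by linarith⟩)
      (by push_cast; linarith)
    rw [mem_next hP, sub_add_cancel] at hmem
    exact (mem_sdiff.1 hmem).2 hx

lemma IsCompletion.image_shift_filter_mem {g : Fin (m * lam) → Fin m}
    (hg : IsCompletion m lam d (t + 1) (next lam d P X) g) (ht : t < m)
    (hP : P ⊆ window lam d) (hmin : ∀ x ∈ P, 1 ≤ x + t * lam) (hX : X ⊆ P ∪ Qset lam d) :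
    (univ.filter fun i : Fin (m * lam) => shift lam t i ∈ X).image (shift lam t) = X := by
  ext x
  simp only [mem_image, mem_filter, mem_univ, true_and]
  constructor
  · rintro ⟨i, hi, rfl⟩
    exact hi
  · intro hx
    obtain ⟨i, rfl⟩ := hg.exists_shift_eq_of_mem ht hP hmin hX hx
    exact ⟨i, hx, rfl⟩

lemma IsCompletion.restoreSymbol_spec {g : Fin (m * lam) → Fin m}
    (hg : IsCompletion m lam d (t + 1) (next lam d P X) g) (ht : t < m)
    (hP : P ∈ verts lam d) (hmin : ∀ x ∈ P, 1 ≤ x + t * lam) (hX : X ⊆ P ∪ Qset lam d)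
    (i : Fin (m * lam)) :
    (t ≤ (restoreSymbol ht X g i).val ↔ Unfilled lam d t P i) ∧
      ((restoreSymbol ht X g i).val = t ↔ shift lam t i ∈ X) := by
  have hunf := (hg.unfilled_iff_le i).symm.trans (unfilled_next_iff (mem_verts.1 hP).1 hX i)
  unfold restoreSymbol
  split_ifs with h₁ h₂
  · exact ⟨iff_of_true (by omega) (hunf.1 h₁).1, iff_of_false (by omega) (hunf.1 h₁).2⟩
  · exact ⟨iff_of_true le_rfl (unfilled_iff.2 (Or.inl (hX h₂))), iff_of_true rfl h₂⟩
  · have hfilled : ¬ Unfilled lam d t P i := fun h => h₁ (hunf.2 ⟨h, h₂⟩)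
    have ht0 : 0 < t := Nat.pos_of_ne_zero fun h0 => by
      subst h0; exact hfilled (unfilled_zero hP (fun x hx => by simpa using hmin x hx) i)
    have := filler_lt (m := m) ht0 i
    exact ⟨iff_of_false (by omega) hfilled, iff_of_false (by omega) h₂⟩

lemma isCompletion_restoreSymbol {g : Fin (m * lam) → Fin m}
    (hg : IsCompletion m lam d (t + 1) (next lam d P X) g) (ht : t < m)
    (hP : P ∈ verts lam d) (hmin : ∀ x ∈ P, 1 ≤ x + t * lam) (hX : X ∈ moves lam d P) :
    IsCompletion m lam d t P (restoreSymbol ht X g) := by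
  obtain ⟨hXsub, hXcard, -⟩ := mem_moves.1 hX
  have hPW := (mem_verts.1 hP).1
  have hspec := hg.restoreSymbol_spec ht hP hmin hXsub
  refine ⟨fun i => (hspec i).1.symm, fun i h => ?_, fun k hk => ?_, fun i hi => ?_,
    fun s hs hlt => ?_⟩
  · have h' := (hspec i).1.not.2 h
    unfold restoreSymbol at h' ⊢
    split_ifs at h' ⊢
    · exact absurd (by omega) h'
    · exact absurd le_rfl h'
    · rfl
  · rcases hk.eq_or_lt with heq | hlt
    · calc _ = (univ.filter fun i : Fin (m * lam) => shift lam t i ∈ X).card :=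
            congrArg card (filter_congr fun i _ => Fin.ext_iff.trans (heq ▸ (hspec i).2))
        _ = lam := by
          rw [← card_image_of_injective _ shift_injective,
            hg.image_shift_filter_mem ht hPW hmin hXsub, hXcard]
    · refine Eq.trans ?_ (hg.card_fiber k hlt)
      congr 1
      refine filter_congr fun i _ => ?_
      by_cases h : t + 1 ≤ (g i).val
      · simp only [restoreSymbol, if_pos h]
      · have := restoreSymbol_val_le ht X h
        constructor <;> rintro rfl <;> omega
  · by_cases h : t + 1 ≤ (g i).val
    · rw [show restoreSymbol ht X g i = g i from if_pos h]
      exact hg.shift_bounds i h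
    · have hval : (restoreSymbol ht X g i).val = t :=
        le_antisymm (restoreSymbol_val_le ht X h) hi
      rw [hval]
      exact bounds_of_mem_union hPW (hXsub ((hspec i).2.1 hval))
  · have htm : ((t + 1 : ℕ) : ℤ) * lam ≤ m * lam := by gcongr; exact_mod_cast ht
    have hs' := mem_window.1 hs
    push_cast at htm
    have hmem := hg.tail_mem (s - lam) (mem_window.2 ⟨by nlinarith, by nlinarith⟩)
      (by push_cast; linarith)
    rw [mem_next hPW, sub_add_cancel] at hmem
    rcases mem_union.1 (mem_sdiff.1 hmem).1 with h | h
    · exact h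
    · linarith [(mem_Qset.1 h).1]

lemma IsCompletion.placed_restoreSymbol {g : Fin (m * lam) → Fin m}
    (hg : IsCompletion m lam d (t + 1) (next lam d P X) g) (ht : t < m)
    (hP : P ∈ verts lam d) (hmin : ∀ x ∈ P, 1 ≤ x + t * lam) (hX : X ⊆ P ∪ Qset lam d) :
    placed m lam t (restoreSymbol ht X g) = X := by
  refine Eq.trans ?_ (hg.image_shift_filter_mem ht (mem_verts.1 hP).1 hmin hX)
  unfold placed
  congr 1
  exact filter_congr fun i _ => (hg.restoreSymbol_spec ht hP hmin hX i).2

lemma IsCompletion.restoreSymbol_forgetSymbol {f : Fin (m * lam) → Fin m}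
    (hf : IsCompletion m lam d t P f) (ht : t < m) :
    restoreSymbol ht (placed m lam t f) (forgetSymbol t f) = f := by
  funext i
  by_cases h : t + 1 ≤ (f i).val
  · simp only [restoreSymbol, forgetSymbol, if_pos h]
  · have := filler_lt (m := m) (by omega : 0 < t + 1) i
    have h' : ¬ t + 1 ≤ (forgetSymbol t f i).val := by
      simp only [forgetSymbol, if_neg h]; omega
    simp only [restoreSymbol, if_neg h', shift_mem_placed]
    split_ifs with hft
    · exact Fin.ext hft.symm
    · exact (hf.eq_filler i fun hu => by have := (hf.unfilled_iff_le i).1 hu; omega).symm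

lemma IsCompletion.forgetSymbol_restoreSymbol {Q : Finset ℤ} {g : Fin (m * lam) → Fin m}
    (hg : IsCompletion m lam d (t + 1) Q g) (ht : t < m) (X : Finset ℤ) :
    forgetSymbol t (restoreSymbol ht X g) = g := by
  funext i
  by_cases h : t + 1 ≤ (g i).val
  · simp only [forgetSymbol, restoreSymbol, if_pos h]
  · have h' : ¬ t + 1 ≤ (restoreSymbol ht X g i).val := by
      have := restoreSymbol_val_le ht X h; omega
    simp only [forgetSymbol, if_neg h']
    exact (hg.eq_filler i fun hu => h ((hg.unfilled_iff_le i).1 hu)).symm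

lemma card_filter_placed_eq (ht : t < m) (hP : P ∈ verts lam d)
    (hmin : ∀ x ∈ P, 1 ≤ x + t * lam) (hX : X ∈ moves lam d P) :
    ((completions m lam d t P).filter fun f => placed m lam t f = X).card =
      (completions m lam d (t + 1) (next lam d P X)).card := by
  have hXsub := (mem_moves.1 hX).1
  refine card_bij' (fun f _ => forgetSymbol t f) (fun g _ => restoreSymbol ht X g)
    (fun f hf => ?_) (fun g hg => ?_) (fun f hf => ?_) (fun g hg => ?_)
  · obtain ⟨hf', rfl⟩ := mem_filter.1 hf
    exact mem_completions.2
      (isCompletion_forgetSymbol (mem_verts.1 hP).1 (mem_completions.1 hf') hXsub)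
  · have hg' := mem_completions.1 hg
    exact mem_filter.2 ⟨mem_completions.2 (isCompletion_restoreSymbol hg' ht hP hmin hX),
      hg'.placed_restoreSymbol ht hP hmin hXsub⟩
  · obtain ⟨hf', rfl⟩ := mem_filter.1 hf
    exact (mem_completions.1 hf').restoreSymbol_forgetSymbol ht
  · exact (mem_completions.1 hg).forgetSymbol_restoreSymbol ht X

lemma card_completions_eq_sum (ht : t < m) (P : {P // P ∈ verts lam d})
    (hmin : ∀ x ∈ P.val, 1 ≤ x + t * lam) :
    ((completions m lam d t P).card : ℤ) =
      ∑ Q : {P // P ∈ verts lam d}, AHZ lam d P Q * (completions m lam d (t + 1) Q).card := by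
  have hP := P.2
  rw [card_eq_sum_card_fiberwise fun f hf => placed_mem_moves ht hmin (mem_completions.1 hf),
    sum_congr rfl fun X hX => card_filter_placed_eq ht hP hmin hX,
    ← sum_fiberwise_of_maps_to (g := next lam d P) fun X hX => next_mem_verts hP hX]
  push_cast
  rw [← sum_coe_sort (verts lam d)]
  refine sum_congr rfl fun Q _ => ?_
  rw [AHZ_apply, sum_congr rfl fun X hX => by rw [(mem_filter.1 hX).2], sum_const, nsmul_eq_mul]

lemma card_completions_last {P : Finset ℤ} (hP : P ∈ verts lam d) :
    (completions m lam d m P).card = if P = startVertex lam d then 1 else 0 := by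
  split_ifs with h
  · rw [h, completions_last_startVertex, card_singleton]
  · rw [completions_last_eq_empty hP h, card_empty]

lemma exists_eq_next_of_AHZ_ne_zero {P Q : {P // P ∈ verts lam d}} (h : AHZ lam d P Q ≠ 0) :
    ∃ X ∈ moves lam d P, next lam d P X = Q := by
  rw [AHZ_apply, Nat.cast_ne_zero, ← pos_iff_ne_zero, card_pos] at h
  obtain ⟨X, hX⟩ := h
  exact ⟨X, (mem_filter.1 hX).1, (mem_filter.1 hX).2⟩

theorem Vinf_eq_AHZ_pow_apply (hlam : 0 < lam) :
    (Vinf m lam d : ℤ) =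
      (AHZ lam d ^ m) ⟨_, startVertex_mem_verts⟩ ⟨_, startVertex_mem_verts⟩ := by
  -- the invariant: no state contains the shift of a position before the first one
  have htransfer := (AHZ lam d).eq_sum_pow_mul_of_transfer
    (fun t P => ((completions m lam d t P).card : ℤ))
    (fun t P => ∀ x ∈ P.val, 1 ≤ x + t * lam)
    (fun t ht P hP => card_completions_eq_sum ht P hP)
    (fun t P Q hP hPQ => by
      obtain ⟨X, hX, hQ⟩ := exists_eq_next_of_AHZ_ne_zero hPQ
      exact hQ ▸ next_lower_bound (mem_verts.1 P.2).1 hP)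
    (P := ⟨_, startVertex_mem_verts⟩) (fun x hx => by simpa using (mem_startVertex.1 hx).1)
  rw [Vinf, ball_eq_completions_zero hlam, htransfer,
    sum_eq_single_of_mem ⟨_, startVertex_mem_verts⟩ (mem_univ _)]
  · rw [card_completions_last startVertex_mem_verts, if_pos rfl, Nat.cast_one, mul_one]
  · intro Q _ hQ
    rw [card_completions_last Q.2, if_neg fun h => hQ (Subtype.ext h), Nat.cast_zero, mul_zero]

end ChebyshevBall

theorem Vinf_linear_recurrence (lam d : ℕ) (hlam : 0 < lam) :
    ∀ j : ℕ, ∑ k ∈ Finset.range (Nat.choose (2 * d * lam) (d * lam) + 1),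
      (Matrix.charpoly (AHZ lam d)).coeff k * (Vinf (j + k) lam d : ℤ) = 0 := by
  intro j
  have hcard : Fintype.card {P // P ∈ verts lam d} = (2 * d * lam).choose (d * lam) := by
    rw [Fintype.card_coe, ChebyshevBall.card_verts]
  simp_rw [ChebyshevBall.Vinf_eq_AHZ_pow_apply hlam, ← hcard]
  exact (AHZ lam d).sum_charpoly_coeff_mul_pow_add_apply j _ _
end
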